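/- arXiv:math/0412395 — 5 statements merged into one kernel-verified Lean document; each statement's English description precedes it below -/
import Mathlib

section
/- Let T be a symplectic triple system over a field k of characteristic ≠ 2, and if char k = 3 assume dim T > 2. Then T is simple if and only if the alternating bilinear form (·|·) is nondegenerate. -/
/-- A symplectic triple system: a finite-dimensional vector space `T` over a field `k`
with a nonzero alternating bilinear form `B` and a trilinear product `tp` satisfying
identities (a)–(d). -/
def IsSympTripleSystem (k : Type*) {T : Type*} [Field k] [AddCommGroup T] [Module k T]
    (tp : T →ₗ[k] T →ₗ[k] T →ₗ[k] T) (B : T →ₗ[k] T →ₗ[k] k) : Prop :=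
  (∀ x : T, B x x = 0) ∧ B ≠ 0 ∧
  (∀ x y z : T, tp x y z = tp y x z) ∧
  (∀ x y z : T, tp x y z - tp x z y = B x z • y - B x y • z + (2 * B y z) • x) ∧
  (∀ x y u v w : T, tp x y (tp u v w) =
      tp (tp x y u) v w + tp u (tp x y v) w + tp u v (tp x y w)) ∧
  (∀ x y u v : T, B (tp x y u) v + B u (tp x y v) = 0)

/-- An ideal of a symplectic triple system: a subspace `I` with `[TTI] + [TIT] ⊆ I`. -/
def IsIdealSTS (k : Type*) {T : Type*} [Field k] [AddCommGroup T] [Module k T]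
    (tp : T →ₗ[k] T →ₗ[k] T →ₗ[k] T) (I : Submodule k T) : Prop :=
  ∀ x y z : T, (z ∈ I → tp x y z ∈ I) ∧ (y ∈ I → tp x y z ∈ I)

/-- A symplectic triple system is simple if `[TTT] ≠ 0` and it has no proper nonzero ideal. -/
def IsSimpleSTS (k : Type*) {T : Type*} [Field k] [AddCommGroup T] [Module k T]
    (tp : T →ₗ[k] T →ₗ[k] T →ₗ[k] T) : Prop :=
  (∃ x y z : T, tp x y z ≠ 0) ∧
  ∀ I : Submodule k T, IsIdealSTS k tp I → I = ⊥ ∨ I = ⊤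

section
variable {k T : Type*} [Field k] [AddCommGroup T] [Module k T]

lemma auxSTS_span_two [FiniteDimensional k T] (x z : T)
    (h : ∀ y : T, y ∈ Submodule.span k ({x, z} : Set T)) :
    Module.finrank k T ≤ 2 := by
  haveI := Classical.decEq T
  have htop : Submodule.span k ({x, z} : Set T) = ⊤ := eq_top_iff.mpr fun y _ => h y
  have h1 : Module.finrank k T = Module.finrank k (Submodule.span k ({x, z} : Set T)) := by
    rw [htop]; exact (finrank_top k T).symm
  rw [h1]
  refine le_trans (finrank_span_le_card _) ?_
  simp [Set.toFinset_insert, Set.toFinset_singleton]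
  exact le_trans (Finset.card_insert_le _ _) (by simp)

lemma auxSTS_char (p : ℕ) (hp : p.Prime) (h : (p : k) = 0) : ringChar k = p := by
  have hd : ringChar k ∣ p := (ringChar.spec k p).mp h
  rcases (Nat.dvd_prime hp).mp hd with h1 | h1
  · exact absurd h1 (CharP.char_ne_one k (ringChar k))
  · exact h1

end

/-- A symplectic triple system over a field of characteristic `≠ 2`
(of dimension `> 2` if the characteristic is `3`) is simple if and only if its
alternating bilinear form is nondegenerate. -/
theorem simple_iff_nondegenerate_STS (k T : Type*) [Field k] [AddCommGroup T] [Module k T]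
    [FiniteDimensional k T] (hchar : ringChar k ≠ 2)
    (tp : T →ₗ[k] T →ₗ[k] T →ₗ[k] T) (B : T →ₗ[k] T →ₗ[k] k)
    (hsts : IsSympTripleSystem k tp B)
    (hdim : ringChar k = 3 → 2 < Module.finrank k T) :
    IsSimpleSTS k tp ↔ ∀ x : T, (∀ y : T, B x y = 0) → x = 0 := by
  obtain ⟨hB0, hBne, ha, hb, hc, hd⟩ := hsts
  have skew : ∀ p q : T, B p q = - B q p := by
    intro p q
    have h := hB0 (p + q)
    simp only [map_add, LinearMap.add_apply] at h
    rw [hB0 p, hB0 q] at h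
    linear_combination h
  have two_ne : (2 : k) ≠ 0 := fun h => hchar (auxSTS_char 2 Nat.prime_two h)
  have three_char : (3 : k) = 0 → ringChar k = 3 := auxSTS_char 3 Nat.prime_three
  constructor
  · -- simple → nondegenerate
    rintro ⟨-, hsimp⟩ p hp
    have hthird : ∀ a b c : T, c ∈ LinearMap.ker B → tp a b c ∈ LinearMap.ker B := by
      intro a b c hcK
      rw [LinearMap.mem_ker] at hcK ⊢
      ext v
      have h2 : B c (tp a b v) = 0 := by rw [hcK]; rfl
      simp only [LinearMap.zero_apply]
      linear_combination (hd a b c v) - h2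
    have hker : IsIdealSTS k tp (LinearMap.ker B) := by
      intro a b c
      refine ⟨hthird a b c, ?_⟩
      intro hbK
      have hb' : ∀ y, B b y = 0 := by
        intro y; rw [LinearMap.mem_ker] at hbK; rw [hbK]; rfl
      have hab : B a b = 0 := by rw [skew a b, hb' a, neg_zero]
      have hbc : B b c = 0 := hb' c
      have heq : tp a b c = (B a c • b) + tp a c b := by
        have h1 := hb a b c
        rw [hab, hbc] at h1
        linear_combination (norm := module) h1
      rw [heq]
      exact Submodule.add_mem _ (Submodule.smul_mem _ _ hbK) (hthird a c b hbK)
    rcases hsimp (LinearMap.ker B) hker with h | h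
    · have hpk : p ∈ LinearMap.ker B := by
        rw [LinearMap.mem_ker]; ext y; simp [hp y]
      rw [h] at hpk
      exact (Submodule.mem_bot k).mp hpk
    · exfalso
      apply hBne
      ext u v
      have : u ∈ LinearMap.ker B := h ▸ Submodule.mem_top
      rw [LinearMap.mem_ker] at this
      rw [this]; rfl
  · -- nondegenerate → simple
    intro hnd
    have hBex : ∃ p q : T, B p q ≠ 0 := by
      by_contra h
      push_neg at h
      exact hBne (by ext p q; simpa using h p q)
    constructor
    · -- tp ≠ 0
      by_contra h
      push_neg at h
      obtain ⟨p, q, hpq⟩ := hBex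
      have hrel : ∀ y : T, B p q • y - B p y • q + (2 * B y q) • p = 0 := by
        intro y
        have h1 := hb p y q
        rw [h p y q, h p q y] at h1
        linear_combination (norm := module) -h1
      have hp0 : p ≠ 0 := fun h0 => by rw [h0] at hpq; simp at hpq
      have h3 : (3 : k) = 0 := by
        have h1 := hrel p
        have h2 : (3 * B p q) • p = 0 := by
          rw [← h1, hB0 p]; module
        rcases smul_eq_zero.mp h2 with h4 | h4
        · rcases mul_eq_zero.mp h4 with h5 | h5
          · exact h5
          · exact absurd h5 hpq
        · exact absurd h4 hp0
      have hfin := hdim (three_char h3)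
      have hspan : ∀ y : T, y ∈ Submodule.span k ({q, p} : Set T) := by
        intro y
        have h5 : B p q • y = B p y • q - (2 * B y q) • p := by
          linear_combination (norm := module) hrel y
        have h6 : y = (B p q)⁻¹ • (B p y • q - (2 * B y q) • p) := by
          rw [← h5, inv_smul_smul₀ hpq]
        rw [h6]
        exact Submodule.smul_mem _ _ (Submodule.sub_mem _
          (Submodule.smul_mem _ _ (Submodule.subset_span (by simp)))
          (Submodule.smul_mem _ _ (Submodule.subset_span (by simp))))
      have := auxSTS_span_two q p hspan
      omega
    · -- no proper ideals
      intro I hI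
      by_cases hIbot : I = ⊥
      · exact Or.inl hIbot
      right
      obtain ⟨z, hzI, hz0⟩ := Submodule.ne_bot_iff I |>.mp hIbot
      have hzw : ∃ w : T, B w z ≠ 0 := by
        by_contra hcon
        push_neg at hcon
        apply hz0
        apply hnd
        intro y
        rw [skew z y, hcon y, neg_zero]
      obtain ⟨w, hw⟩ := hzw
      set x := (B w z)⁻¹ • w with hxdef
      have hxz : B x z = 1 := by
        rw [hxdef]
        simp only [map_smul, LinearMap.smul_apply, smul_eq_mul]
        exact inv_mul_cancel₀ hw
      have hK : ∀ a b w' : T, w' ∈ I →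
          (B a w' • b - B a b • w' + (2 * B b w') • a) ∈ I := by
        intro a b w' hw'
        rw [← hb a b w']
        exact Submodule.sub_mem _ ((hI a b w').1 hw') ((hI a w' b).2 hw')
      have hE1 : ∀ y : T, (y - B x y • z + (2 * B y z) • x) ∈ I := by
        intro y
        have h1 := hK x y z hzI
        rwa [hxz, one_smul] at h1
      by_cases h3 : ringChar k = 3
      · -- characteristic 3
        have h3k : (3 : k) = 0 := by
          have := (ringChar.spec k 3).mpr (by rw [h3])
          exact this
        have hfin := hdim h3
        by_cases hxI : x ∈ I
        · rw [eq_top_iff]; rintro y -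
          have heq : y = (y - B x y • z + (2 * B y z) • x) + B x y • z - (2 * B y z) • x := by
            module
          rw [heq]
          exact Submodule.sub_mem _ (Submodule.add_mem _ (hE1 y)
            (Submodule.smul_mem _ _ hzI)) (Submodule.smul_mem _ _ hxI)
        · exfalso
          -- I = z^perp
          have hmemz : ∀ y ∈ I, B y z = 0 := by
            intro y hy
            by_contra hne
            apply hxI
            have h1 : ((2 * B y z) • x) ∈ I := by
              have heq : (2 * B y z) • x =
                  (y - B x y • z + (2 * B y z) • x) - y + B x y • z := by module
              rw [heq]
              exact Submodule.add_mem _ (Submodule.sub_mem _ (hE1 y) hy)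
                (Submodule.smul_mem _ _ hzI)
            have h2ne : (2 * B y z) ≠ 0 := mul_ne_zero two_ne hne
            have h2 := Submodule.smul_mem _ (2 * B y z)⁻¹ h1
            rwa [inv_smul_smul₀ h2ne] at h2
          have hmemz' : ∀ y : T, B y z = 0 → y ∈ I := by
            intro y hy
            have heq : y = (y - B x y • z + (2 * B y z) • x) + B x y • z := by
              rw [hy]; module
            rw [heq]
            exact Submodule.add_mem _ (hE1 y) (Submodule.smul_mem _ _ hzI)
          have hBmem : ∀ c : T, (c - B c z • x) ∈ I := by
            intro c
            apply hmemz'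
            simp only [map_sub, map_smul, LinearMap.sub_apply, LinearMap.smul_apply,
              smul_eq_mul, hxz, mul_one]
            ring
          -- Step A : tp x x x ∈ I
          have hstepA : tp x x x ∈ I := by
            have h1 := hc x x x x x
            have h2a : tp (tp x x x) x x = tp x (tp x x x) x := ha (tp x x x) x x
            rw [h2a] at h1
            have h2b : (2 : k) • tp x (tp x x x) x = 0 := by
              linear_combination (norm := module) -h1
            have h2 : tp x (tp x x x) x = 0 := by
              rcases smul_eq_zero.mp h2b with h | h
              · exact absurd h two_ne
              · exact h
            have hmI : (tp x x x - B (tp x x x) z • x) ∈ I := hBmem (tp x x x)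
            have h6 : tp x (tp x x x - B (tp x x x) z • x) x ∈ I := (hI x _ x).2 hmI
            have h5 : B (tp x x x) z • tp x x x ∈ I := by
              have heq : B (tp x x x) z • tp x x x =
                  tp x (tp x x x) x - tp x (tp x x x - B (tp x x x) z • x) x := by
                simp only [map_sub, map_smul, LinearMap.sub_apply, LinearMap.smul_apply]
                module
              rw [heq, h2, zero_sub]
              exact Submodule.neg_mem _ h6
            have h7 : B (tp x x x) z * B (tp x x x) z = 0 := by
              have h8 := hmemz _ h5
              simpa only [map_smul, LinearMap.smul_apply, smul_eq_mul] using h8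
            apply hmemz'
            rcases mul_eq_zero.mp h7 with h | h <;> exact h
          -- Step B : all products lie in I
          have hstep2 : ∀ c : T, tp x x c ∈ I := by
            intro c
            have heq : tp x x c = B c z • tp x x x + tp x x (c - B c z • x) := by
              simp only [map_sub, map_smul]
              module
            rw [heq]
            exact Submodule.add_mem _ (Submodule.smul_mem _ _ hstepA) ((hI x x _).1 (hBmem c))
          have hstep3 : ∀ b c : T, tp x b c ∈ I := by
            intro b c
            have heq : tp x b c = B b z • tp x x c + tp x (b - B b z • x) c := by
              simp only [map_sub, map_smul, LinearMap.sub_apply, LinearMap.smul_apply]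
              module
            rw [heq]
            exact Submodule.add_mem _ (Submodule.smul_mem _ _ (hstep2 c)) ((hI x _ c).2 (hBmem b))
          have hstep4 : ∀ a b c : T, tp a b c ∈ I := by
            intro a b c
            have heq : tp a b c = B a z • tp x b c + tp (a - B a z • x) b c := by
              simp only [map_sub, map_smul, LinearMap.sub_apply, LinearMap.smul_apply]
              module
            rw [heq]
            refine Submodule.add_mem _ (Submodule.smul_mem _ _ (hstep3 b c)) ?_
            rw [ha]
            exact (hI b _ c).2 (hBmem a)
          -- Step C : tp a b z = 0
          have hstepC : ∀ a b : T, tp a b z = 0 := by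
            intro a b
            apply hnd
            intro cv
            have h1 := hd a b z cv
            have h2 : B z (tp a b cv) = 0 := by
              rw [skew z (tp a b cv), hmemz _ (hstep4 a b cv), neg_zero]
            linear_combination h1 - h2
          -- Step D : formula for tp a z b
          have hstepD : ∀ a b : T, tp a z b = B a b • z - B a z • b - (2 * B b z) • a := by
            intro a b
            have h1 := hb a b z
            rw [hstepC a b] at h1
            linear_combination (norm := module) -h1
          have hIz : ∀ p q : T, p ∈ I → q ∈ I → tp p z q = B p q • z := by
            intro p q hp hq
            rw [hstepD p q, hmemz p hp, hmemz q hq]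
            module
          have hxzI : ∀ p : T, p ∈ I → tp x z p = B x p • z - p := by
            intro p hp
            rw [hstepD x p, hxz, hmemz p hp]
            module
          -- identity (ii)
          have h_ii : ∀ a u v w : T, a ∈ I → u ∈ I → v ∈ I → w ∈ I →
              B a (tp u v w) = B a u * B v w + B a v * B u w := by
            intro a u v w haI huI hvI hwI
            have hqI : tp u v w ∈ I := (hI u v w).2 hvI
            have e := hc a z u v w
            rw [hIz a u haI huI, hIz a v haI hvI, hIz a w haI hwI, hIz a _ haI hqI] at e
            simp only [map_smul, LinearMap.smul_apply] at e
            rw [ha z v w, hIz v w hvI hwI, hIz u w huI hwI, hstepC u v] at e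
            have e2 : (B a (tp u v w) - (B a u * B v w + B a v * B u w)) • z = 0 := by
              linear_combination (norm := module) e
            rcases smul_eq_zero.mp e2 with h | h
            · linear_combination h
            · exact absurd h hz0
          by_cases huvex : ∃ u v : T, u ∈ I ∧ v ∈ I ∧ B u v ≠ 0
          · obtain ⟨u, v0, huI, hv0I, huv0⟩ := huvex
            have hvI : ((B u v0)⁻¹ • v0) ∈ I := Submodule.smul_mem _ _ hv0I
            set v := (B u v0)⁻¹ • v0 with hvdef
            have huv : B u v = 1 := by
              rw [hvdef, map_smul, smul_eq_mul]
              exact inv_mul_cancel₀ huv0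
            have hqI : tp u v v ∈ I := (hI u v v).2 hvI
            have e := hc x z u v v
            rw [hxzI u huI, hxzI v hvI, hxzI _ hqI] at e
            simp only [map_sub, map_smul, LinearMap.sub_apply, LinearMap.smul_apply] at e
            rw [ha z v v, hIz v v hvI hvI, hIz u v huI hvI, hstepC u v] at e
            rw [hB0 v, huv] at e
            have h3q : (3 : k) • tp u v v = 0 := by rw [h3k]; exact zero_smul k _
            have hqz : tp u v v = (B x (tp u v v) - B x v) • z := by
              linear_combination (norm := module) -e + h3q
            have hzq : B u (tp u v v) = 0 := by
              rw [hqz, map_smul, smul_eq_mul, hmemz u huI, mul_zero]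
            have hone := h_ii u u v v huI huI hvI hvI
            rw [hzq, hB0 u, huv, hB0 v] at hone
            simp at hone
          · push_neg at huvex
            have hspan : ∀ y : T, y ∈ Submodule.span k ({x, z} : Set T) := by
              intro y
              have hyI : (y - B y z • x) ∈ I := hBmem y
              have hu0 : (y - B y z • x) + (B (y - B y z • x) x) • z = 0 := by
                apply hnd
                intro cv
                have hcI : (cv - B cv z • x) ∈ I := hBmem cv
                have hdec : cv = B cv z • x + (cv - B cv z • x) := by module
                have h1 : B (y - B y z • x) cv = B cv z * B (y - B y z • x) x := by
                  conv_lhs => rw [hdec]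
                  rw [map_add, map_smul, smul_eq_mul, huvex _ _ hyI hcI, add_zero]
                have h2 : B z cv = - B cv z := by
                  conv_lhs => rw [hdec]
                  rw [map_add, map_smul, smul_eq_mul, skew z x, hxz,
                    skew z (cv - B cv z • x), hmemz _ hcI, neg_zero, add_zero]
                  ring
                rw [map_add, LinearMap.add_apply, map_smul, LinearMap.smul_apply,
                  smul_eq_mul, h1, h2]
                ring
              have hy : y = B y z • x + (-(B (y - B y z • x) x)) • z := by
                linear_combination (norm := module) hu0
              rw [hy]
              exact Submodule.add_mem _
                (Submodule.smul_mem _ _ (Submodule.subset_span (by simp)))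
                (Submodule.smul_mem _ _ (Submodule.subset_span (by simp)))
            have := auxSTS_span_two x z hspan
            omega
      · -- characteristic ≠ 3
        have h3ne : (3 : k) ≠ 0 := fun hh => h3 (three_char hh)
        rw [eq_top_iff]; rintro y -
        have hE2 : (B y z • x - B y x • z + (2 * B x z) • y) ∈ I := hK y x z hzI
        have hcomb : ((3 : k) • y + (3 * B x y) • z) ∈ I := by
          have hsub := Submodule.sub_mem _ (Submodule.smul_mem _ (2 : k) hE2) (hE1 y)
          have heq : (2 : k) • (B y z • x - B y x • z + (2 * B x z) • y) -
              (y - B x y • z + (2 * B y z) • x) = (3 : k) • y + (3 * B x y) • z := by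
            rw [hxz, skew y x]; module
          rwa [heq] at hsub
        have hyI : (3 : k) • y ∈ I := by
          have h1 := Submodule.sub_mem _ hcomb (Submodule.smul_mem _ (3 * B x y) hzI)
          have heq : (3 : k) • y + (3 * B x y) • z - (3 * B x y) • z = (3 : k) • y := by
            module
          rwa [heq] at h1
        have h2 := Submodule.smul_mem _ (3 : k)⁻¹ hyI
        rwa [inv_smul_smul₀ h3ne] at h2
end

section
/- Let T be a two-dimensional symplectic triple system over a field k of characteristic 3. Then either: (i) there is a basis {a,b} of T with (a|b) = 1 and a scalar α ∈ k such that [aaa] = αb and all other triple products of basis elements are 0; or (ii) there is a basis {a,b} with (a|b) = 1 and a scalar 0 ≠ ε ∈ k such that [aaa] = 0 = [bbb], [aab] = [aba] = [baa] = εa, and [abb] = [bab] = [bba] = −εb. -/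
section

variable {k T : Type*} [Field k] [AddCommGroup T] [Module k T]

namespace LinearMap

variable {B : T →ₗ[k] T →ₗ[k] k}

theorem exists_apply_apply_eq_one (hB : B ≠ 0) : ∃ a b : T, B a b = 1 := by
  obtain ⟨a, b, hab⟩ : ∃ a b : T, B a b ≠ 0 := by
    by_contra! h
    exact hB (ext₂ h)
  exact ⟨a, (B a b)⁻¹ • b, by simp [hab]⟩

namespace IsAlt

variable {a b : T}

theorem linearIndependent_pair (hB : B.IsAlt) (hab : B a b = 1) :
    LinearIndependent k ![a, b] := by
  refine LinearIndependent.pair_iff.mpr fun s t hst => ⟨?_, ?_⟩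
  · simpa [hab, hB b] using congrArg (B · b) hst
  · simpa [← hB.neg a b, hab, hB a] using congrArg (B · a) hst

theorem span_pair_eq_top (hB : B.IsAlt) (hdim : Module.finrank k T = 2) (hab : B a b = 1) :
    Submodule.span k {a, b} = ⊤ := by
  simpa [Matrix.range_cons, Matrix.range_empty, Set.union_singleton, Set.pair_comm] using
    (hB.linearIndependent_pair hab).span_eq_top_of_card_eq_finrank (by simp [hdim])

theorem eq_smul_sub_smul (hB : B.IsAlt) (hdim : Module.finrank k T = 2) (hab : B a b = 1)
    (u : T) : u = B u b • a - B u a • b := by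
  obtain ⟨s, t, rfl⟩ :=
    Submodule.mem_span_pair.mp (hB.span_pair_eq_top hdim hab ▸ Submodule.mem_top : u ∈ _)
  simp [hab, ← hB.neg a b, hB a, hB b]

theorem cyclic_sum_eq_zero (hB : B.IsAlt) (hdim : Module.finrank k T = 2) (x y z : T) :
    B y z • x + B z x • y + B x y • z = 0 := by
  rcases eq_or_ne B 0 with rfl | hB₀
  · simp
  obtain ⟨a, b, hab⟩ := exists_apply_apply_eq_one hB₀
  have hrep := hB.eq_smul_sub_smul hdim hab
  rw [hrep x, hrep y, hrep z]
  simp [hab, ← hB.neg a b, hB a, hB b]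
  module

end IsAlt

end LinearMap

def HasNormalFormI (tp : T →ₗ[k] T →ₗ[k] T →ₗ[k] T) (B : T →ₗ[k] T →ₗ[k] k) : Prop :=
  ∃ a b : T, ∃ α : k, Submodule.span k {a, b} = ⊤ ∧ B a b = 1 ∧
    tp a a a = α • b ∧ tp a a b = 0 ∧ tp a b a = 0 ∧ tp b a a = 0 ∧
    tp a b b = 0 ∧ tp b a b = 0 ∧ tp b b a = 0 ∧ tp b b b = 0

def HasNormalFormII (tp : T →ₗ[k] T →ₗ[k] T →ₗ[k] T) (B : T →ₗ[k] T →ₗ[k] k) : Prop :=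
  ∃ a b : T, ∃ ε : k, Submodule.span k {a, b} = ⊤ ∧ B a b = 1 ∧ ε ≠ 0 ∧
    tp a a a = 0 ∧ tp b b b = 0 ∧
    tp a a b = ε • a ∧ tp a b a = ε • a ∧ tp b a a = ε • a ∧
    tp a b b = -(ε • b) ∧ tp b a b = -(ε • b) ∧ tp b b a = -(ε • b)

namespace IsSympTripleSystem

variable {tp : T →ₗ[k] T →ₗ[k] T →ₗ[k] T} {B : T →ₗ[k] T →ₗ[k] k}

theorem isAlt (h : IsSympTripleSystem k tp B) : B.IsAlt := h.1

theorem ne_zero (h : IsSympTripleSystem k tp B) : B ≠ 0 := h.2.1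

theorem tp_comm (h : IsSympTripleSystem k tp B) (x y z : T) : tp x y z = tp y x z := h.2.2.1 x y z

theorem tp_sub_tp (h : IsSympTripleSystem k tp B) (x y z : T) :
    tp x y z - tp x z y = B x z • y - B x y • z + (2 * B y z) • x := h.2.2.2.1 x y z

theorem tp_tp (h : IsSympTripleSystem k tp B) (x y u v w : T) :
    tp x y (tp u v w) = tp (tp x y u) v w + tp u (tp x y v) w + tp u v (tp x y w) :=
  h.2.2.2.2.1 x y u v w

theorem apply_tp_add_apply_tp (h : IsSympTripleSystem k tp B) (x y u v : T) :
    B (tp x y u) v + B u (tp x y v) = 0 :=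
  h.2.2.2.2.2 x y u v

theorem apply_tp_comm (h : IsSympTripleSystem k tp B) (x y u w : T) :
    B (tp x y u) w = B (tp x y w) u := by
  linear_combination h.apply_tp_add_apply_tp x y u w + h.isAlt.neg u (tp x y w)

theorem tp_comm_right (h : IsSympTripleSystem k tp B) [CharP k 3]
    (hdim : Module.finrank k T = 2) (x y z : T) : tp x y z = tp x z y := by
  have h2 : (2 : k) = -1 := by linear_combination (CharP.cast_eq_zero k 3 : ((3 : ℕ) : k) = 0)
  rw [← sub_eq_zero, h.tp_sub_tp, ← h.isAlt.neg z x, h2]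
  linear_combination (norm := module) -h.isAlt.cyclic_sum_eq_zero hdim x y z

theorem tp_perm (h : IsSympTripleSystem k tp B) [CharP k 3]
    (hdim : Module.finrank k T = 2) (a b : T) :
    tp a b a = tp a a b ∧ tp b a a = tp a a b ∧ tp b a b = tp a b b ∧ tp b b a = tp a b b :=
  ⟨h.tp_comm_right hdim a b a, by rw [h.tp_comm, h.tp_comm_right hdim a b a], h.tp_comm b a b,
    by rw [h.tp_comm_right hdim, h.tp_comm b a b]⟩

variable {a b : T}

theorem tp_eq_smul_sub_smul (h : IsSympTripleSystem k tp B) (hdim : Module.finrank k T = 2)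
    (hab : B a b = 1) (x y : T) : tp x y b = B (tp x y b) b • a - B (tp x y a) b • b := by
  rw [h.apply_tp_comm x y a b]
  exact h.isAlt.eq_smul_sub_smul hdim hab _

theorem tp_basis_eq (h : IsSympTripleSystem k tp B) [CharP k 3]
    (hdim : Module.finrank k T = 2) (hab : B a b = 1) :
    tp a a a = B (tp a a a) b • a - B (tp a a a) a • b ∧
    tp a a b = B (tp a a b) b • a - B (tp a a a) b • b ∧
    tp a b b = B (tp a b b) b • a - B (tp a a b) b • b ∧
    tp b b b = B (tp b b b) b • a - B (tp a b b) b • b := by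
  refine ⟨h.isAlt.eq_smul_sub_smul hdim hab _, h.tp_eq_smul_sub_smul hdim hab a a, ?_, ?_⟩
  · exact (h.tp_eq_smul_sub_smul hdim hab a b).trans (by rw [h.tp_comm_right hdim a b a])
  · exact (h.tp_eq_smul_sub_smul hdim hab b b).trans
      (by rw [h.tp_comm_right hdim b b a, h.tp_comm b a b])

theorem coeff_relations (h : IsSympTripleSystem k tp B) [CharP k 3]
    (hdim : Module.finrank k T = 2) (hab : B a b = 1) {c₀ c₁ c₂ c₃ c₄ : k}
    (haaa : tp a a a = c₁ • a - c₀ • b) (haab : tp a a b = c₂ • a - c₁ • b)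
    (habb : tp a b b = c₃ • a - c₂ • b) (hbbb : tp b b b = c₄ • a - c₃ • b) :
    c₁ ^ 2 = c₀ * c₂ ∧ c₃ ^ 2 = c₂ * c₄ ∧ c₀ * c₄ = c₁ * c₃ := by
  have h3 : (3 : k) = 0 := by exact_mod_cast CharP.cast_eq_zero k 3
  have hba : B b a = -1 := by rw [← h.isAlt.neg, hab]
  obtain ⟨haba, hbaa, hbab, hbba⟩ := h.tp_perm hdim a b
  have e₁ := congrArg (B · b) (h.tp_tp a a a a a)
  have e₂ := congrArg (B · a) (h.tp_tp b b b b b)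
  have e₃ := congrArg (B · b) (h.tp_tp a a b b a)
  simp only [haba, hbaa, hbab, hbba, haaa, haab, habb, hbbb, map_sub, map_smul, map_add,
    LinearMap.sub_apply, LinearMap.smul_apply, LinearMap.add_apply, smul_eq_mul, hab, hba,
    h.isAlt a, h.isAlt b] at e₁ e₂ e₃
  refine ⟨?_, ?_, ?_⟩
  · linear_combination e₁ + (c₁ ^ 2 - c₀ * c₂) * h3
  · linear_combination -e₂ + (c₃ ^ 2 - c₂ * c₄) * h3
  · linear_combination e₃ + (c₂ ^ 2 - c₁ * c₃) * h3

theorem hasNormalFormI_of_basis (h : IsSympTripleSystem k tp B) [CharP k 3]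
    (hdim : Module.finrank k T = 2) (hab : B a b = 1) {α : k} (haaa : tp a a a = α • b)
    (haab : tp a a b = 0) (habb : tp a b b = 0) (hbbb : tp b b b = 0) :
    HasNormalFormI tp B := by
  obtain ⟨haba, hbaa, hbab, hbba⟩ := h.tp_perm hdim a b
  exact ⟨a, b, α, h.isAlt.span_pair_eq_top hdim hab, hab, haaa, haab,
    haba.trans haab, hbaa.trans haab, habb, hbab.trans habb, hbba.trans habb, hbbb⟩

theorem hasNormalFormII_of_basis (h : IsSympTripleSystem k tp B) [CharP k 3]
    (hdim : Module.finrank k T = 2) (hab : B a b = 1) {ε : k} (hε : ε ≠ 0)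
    (haaa : tp a a a = 0) (haab : tp a a b = ε • a) (habb : tp a b b = -(ε • b))
    (hbbb : tp b b b = 0) : HasNormalFormII tp B := by
  obtain ⟨haba, hbaa, hbab, hbba⟩ := h.tp_perm hdim a b
  exact ⟨a, b, ε, h.isAlt.span_pair_eq_top hdim hab, hab, hε, haaa, hbbb, haab,
    haba.trans haab, hbaa.trans haab, habb, hbab.trans habb, hbba.trans habb⟩

theorem hasNormalFormI_of_apply_tp_self_ne_zero (h : IsSympTripleSystem k tp B) [CharP k 3]
    (hdim : Module.finrank k T = 2) (ha : B (tp a a a) a ≠ 0) : HasNormalFormI tp B := by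
  set b := -(B (tp a a a) a)⁻¹ • tp a a a
  have hab : B a b = 1 := by simp [b, ← h.isAlt.neg (tp a a a), ha]
  have hc₁ : B (tp a a a) b = 0 := by simp [b, h.isAlt (tp a a a)]
  obtain ⟨haaa, haab, habb, hbbb⟩ := h.tp_basis_eq hdim hab
  obtain ⟨e₁, e₂, e₃⟩ := h.coeff_relations hdim hab haaa haab habb hbbb
  rw [hc₁] at haaa haab e₁ e₃
  have hc₂ : B (tp a a b) b = 0 := (mul_eq_zero.mp (by simpa using e₁.symm)).resolve_left ha
  have hc₄ : B (tp b b b) b = 0 := (mul_eq_zero.mp (by simpa using e₃)).resolve_left ha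
  have hc₃ : B (tp a b b) b = 0 := by simpa [hc₂] using e₂
  exact h.hasNormalFormI_of_basis hdim hab (α := -B (tp a a a) a) (by simpa using haaa)
    (by simpa [hc₂] using haab) (by simpa [hc₂, hc₃] using habb) (by simpa [hc₃, hc₄] using hbbb)

theorem hasNormalForm_of_forall_apply_tp_self_eq_zero (h : IsSympTripleSystem k tp B)
    [CharP k 3] (hdim : Module.finrank k T = 2) (hQ : ∀ x, B (tp x x x) x = 0) :
    HasNormalFormI tp B ∨ HasNormalFormII tp B := by
  obtain ⟨a, b, hab⟩ := LinearMap.exists_apply_apply_eq_one h.ne_zero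
  obtain ⟨haaa, haab, habb, hbbb⟩ := h.tp_basis_eq hdim hab
  obtain ⟨e₁, e₂, -⟩ := h.coeff_relations hdim hab haaa haab habb hbbb
  rw [hQ a] at haaa e₁
  rw [hQ b] at hbbb e₂
  have hc₁ : B (tp a a a) b = 0 := by simpa using e₁
  have hc₃ : B (tp a b b) b = 0 := by simpa using e₂
  rw [hc₁] at haaa haab
  rw [hc₃] at habb hbbb
  rcases eq_or_ne (B (tp a a b) b) 0 with hc₂ | hc₂
  · exact .inl <| h.hasNormalFormI_of_basis hdim hab (α := 0) (by simpa using haaa)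
      (by simpa [hc₂] using haab) (by simpa [hc₂] using habb) (by simpa using hbbb)
  · exact .inr <| h.hasNormalFormII_of_basis hdim hab hc₂ (by simpa using haaa)
      (by simpa using haab) (by simpa using habb) (by simpa using hbbb)

end IsSympTripleSystem

end

theorem two_dimensional_STS_char_three_general (k T : Type*) [Field k] [AddCommGroup T] [Module k T]
    (hchar : ringChar k = 3)
    (hdim : Module.finrank k T = 2)
    (tp : T →ₗ[k] T →ₗ[k] T →ₗ[k] T) (B : T →ₗ[k] T →ₗ[k] k)
    (hsts : IsSympTripleSystem k tp B) :
    (∃ a b : T, ∃ α : k, Submodule.span k {a, b} = ⊤ ∧ B a b = 1 ∧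
       tp a a a = α • b ∧ tp a a b = 0 ∧ tp a b a = 0 ∧ tp b a a = 0 ∧
       tp a b b = 0 ∧ tp b a b = 0 ∧ tp b b a = 0 ∧ tp b b b = 0) ∨
    (∃ a b : T, ∃ ε : k, Submodule.span k {a, b} = ⊤ ∧ B a b = 1 ∧ ε ≠ 0 ∧
       tp a a a = 0 ∧ tp b b b = 0 ∧
       tp a a b = ε • a ∧ tp a b a = ε • a ∧ tp b a a = ε • a ∧
       tp a b b = -(ε • b) ∧ tp b a b = -(ε • b) ∧ tp b b a = -(ε • b)) := by
  have : CharP k 3 := ringChar.of_eq hchar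
  by_cases hQ : ∀ x, B (tp x x x) x = 0
  · exact hsts.hasNormalForm_of_forall_apply_tp_self_eq_zero hdim hQ
  · push Not at hQ
    obtain ⟨a, ha⟩ := hQ
    exact .inl (hsts.hasNormalFormI_of_apply_tp_self_ne_zero hdim ha)

/-- Classification of the two-dimensional symplectic triple systems over a
field of characteristic 3: either (i) there is a symplectic basis `{a, b}` and `α ∈ k` with
`[aaa] = α • b` and all other products of basis elements zero, or (ii) there is a symplectic
basis `{a, b}` and `0 ≠ ε ∈ k` with `[aaa] = 0 = [bbb]`, `[aab] = [aba] = [baa] = ε • a`,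
`[abb] = [bab] = [bba] = -(ε • b)`. -/
theorem two_dimensional_STS_char_three (k T : Type*) [Field k] [AddCommGroup T] [Module k T]
    [FiniteDimensional k T] (hchar : ringChar k = 3)
    (hdim : Module.finrank k T = 2)
    (tp : T →ₗ[k] T →ₗ[k] T →ₗ[k] T) (B : T →ₗ[k] T →ₗ[k] k)
    (hsts : IsSympTripleSystem k tp B) :
    (∃ a b : T, ∃ α : k, Submodule.span k {a, b} = ⊤ ∧ B a b = 1 ∧
       tp a a a = α • b ∧ tp a a b = 0 ∧ tp a b a = 0 ∧ tp b a a = 0 ∧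
       tp a b b = 0 ∧ tp b a b = 0 ∧ tp b b a = 0 ∧ tp b b b = 0) ∨
    (∃ a b : T, ∃ ε : k, Submodule.span k {a, b} = ⊤ ∧ B a b = 1 ∧ ε ≠ 0 ∧
       tp a a a = 0 ∧ tp b b b = 0 ∧
       tp a a b = ε • a ∧ tp a b a = ε • a ∧ tp b a a = ε • a ∧
       tp a b b = -(ε • b) ∧ tp b a b = -(ε • b) ∧ tp b b a = -(ε • b)) :=
  two_dimensional_STS_char_three_general k T hchar hdim tp B hsts
end

section
/- Over a field k of characteristic 3, two two-dimensional symplectic triple systems of type (i), given by symplectic bases {a,b} with [aaa] = αb (respectively [a'a'a'] = α'b') and all other triple products of basis elements zero, are isomorphic if and only if there is a scalar 0 ≠ μ ∈ k with α = μ⁴α'. Two two-dimensional simple symplectic triple systems of type (ii), given by symplectic bases with [aab]=[aba]=[baa]=εa, [abb]=[bab]=[bba]=−εb, [aaa]=[bbb]=0 (respectively with parameter ε'), are isomorphic if and only if ε = ε'. -/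
/-- Two symplectic triple systems are isomorphic if there is a bijective linear map
preserving the bilinear forms and the triple products. -/
def STSIsomorphic (k : Type*) {T T' : Type*} [Field k]
    [AddCommGroup T] [Module k T] [AddCommGroup T'] [Module k T']
    (tp : T →ₗ[k] T →ₗ[k] T →ₗ[k] T) (B : T →ₗ[k] T →ₗ[k] k)
    (tp' : T' →ₗ[k] T' →ₗ[k] T' →ₗ[k] T') (B' : T' →ₗ[k] T' →ₗ[k] k) : Prop :=
  ∃ φ : T ≃ₗ[k] T', (∀ x y : T, B' (φ x) (φ y) = B x y) ∧
    (∀ x y z : T, φ (tp x y z) = tp' (φ x) (φ y) (φ z))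

/-- A two-dimensional symplectic triple system of type (i): a symplectic basis `{a, b}`
with `[aaa] = α • b` and all other triple products of basis elements zero. -/
def STSTypeI (k : Type*) {T : Type*} [Field k] [AddCommGroup T] [Module k T]
    (tp : T →ₗ[k] T →ₗ[k] T →ₗ[k] T) (B : T →ₗ[k] T →ₗ[k] k) (a b : T) (α : k) : Prop :=
  Submodule.span k {a, b} = ⊤ ∧ B a b = 1 ∧
  tp a a a = α • b ∧ tp a a b = 0 ∧ tp a b a = 0 ∧ tp b a a = 0 ∧
  tp a b b = 0 ∧ tp b a b = 0 ∧ tp b b a = 0 ∧ tp b b b = 0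

/-- A two-dimensional simple symplectic triple system of type (ii): a symplectic basis
`{a, b}` with `[aaa] = 0 = [bbb]`, `[aab] = [aba] = [baa] = ε • a`,
`[abb] = [bab] = [bba] = -(ε • b)`, for some `ε ≠ 0`. -/
def STSTypeII (k : Type*) {T : Type*} [Field k] [AddCommGroup T] [Module k T]
    (tp : T →ₗ[k] T →ₗ[k] T →ₗ[k] T) (B : T →ₗ[k] T →ₗ[k] k) (a b : T) (ε : k) : Prop :=
  Submodule.span k {a, b} = ⊤ ∧ B a b = 1 ∧ ε ≠ 0 ∧
  tp a a a = 0 ∧ tp b b b = 0 ∧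
  tp a a b = ε • a ∧ tp a b a = ε • a ∧ tp b a a = ε • a ∧
  tp a b b = -(ε • b) ∧ tp b a b = -(ε • b) ∧ tp b b a = -(ε • b)

structure IsSymplecticBasis {R M : Type*} [CommRing R] [AddCommGroup M] [Module R M]
    (B : M →ₗ[R] M →ₗ[R] R) (a b : M) : Prop where
  isAlt : B.IsAlt
  span_eq_top : Submodule.span R {a, b} = ⊤
  apply_eq_one : B a b = 1

namespace IsSymplecticBasis

variable {R M M' : Type*} [CommRing R] [AddCommGroup M] [Module R M] [AddCommGroup M']
  [Module R M'] {B : M →ₗ[R] M →ₗ[R] R} {B' : M' →ₗ[R] M' →ₗ[R] R} {a b : M} {a' b' : M'}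

theorem apply_swap (h : IsSymplecticBasis B a b) : B b a = -1 := by
  rw [← h.isAlt.neg, h.apply_eq_one]

theorem eq_smul_add_smul (h : IsSymplecticBasis B a b) (x : M) : x = B x b • a + B a x • b := by
  obtain ⟨c, d, rfl⟩ := Submodule.mem_span_pair.mp (h.span_eq_top ▸ Submodule.mem_top (x := x))
  simp [h.isAlt.self_eq_zero, h.apply_eq_one]

theorem apply_eq (h : IsSymplecticBasis B a b) (x y : M) :
    B x y = B x b * B a y - B a x * B y b := by
  conv_lhs => rw [h.eq_smul_add_smul x, h.eq_smul_add_smul y]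
  simp [h.isAlt.self_eq_zero, h.apply_eq_one, h.apply_swap]
  ring

def repr (h : IsSymplecticBasis B a b) : M ≃ₗ[R] R × R where
  toFun x := (B x b, B a x)
  map_add' x y := by simp
  map_smul' c x := by simp
  invFun p := p.1 • a + p.2 • b
  left_inv x := (h.eq_smul_add_smul x).symm
  right_inv p := by simp [h.isAlt.self_eq_zero, h.apply_eq_one]

@[simp]
theorem repr_apply (h : IsSymplecticBasis B a b) (x : M) : h.repr x = (B x b, B a x) := rfl

def equiv (h : IsSymplecticBasis B a b) (h' : IsSymplecticBasis B' a' b') :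
    M ≃ₗ[R] M' :=
  h.repr.trans h'.repr.symm

theorem repr_equiv (h : IsSymplecticBasis B a b) (h' : IsSymplecticBasis B' a' b') (x : M) :
    h'.repr (h.equiv h' x) = h.repr x := by
  simp [equiv]

theorem equiv_apply (h : IsSymplecticBasis B a b) (h' : IsSymplecticBasis B' a' b') (x : M) :
    h.equiv h' x = B x b • a' + B a x • b' :=
  rfl

theorem apply_equiv_right (h : IsSymplecticBasis B a b) (h' : IsSymplecticBasis B' a' b')
    (x : M) : B' (h.equiv h' x) b' = B x b :=
  congrArg Prod.fst (h.repr_equiv h' x)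

theorem apply_left_equiv (h : IsSymplecticBasis B a b) (h' : IsSymplecticBasis B' a' b')
    (x : M) : B' a' (h.equiv h' x) = B a x :=
  congrArg Prod.snd (h.repr_equiv h' x)

theorem equiv_left (h : IsSymplecticBasis B a b) (h' : IsSymplecticBasis B' a' b') :
    h.equiv h' a = a' := by
  simp [equiv_apply, h.isAlt.self_eq_zero, h.apply_eq_one]

theorem equiv_right (h : IsSymplecticBasis B a b) (h' : IsSymplecticBasis B' a' b') :
    h.equiv h' b = b' := by
  simp [equiv_apply, h.isAlt.self_eq_zero, h.apply_eq_one]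

theorem apply_equiv_equiv (h : IsSymplecticBasis B a b) (h' : IsSymplecticBasis B' a' b') (x y : M) :
    B' (h.equiv h' x) (h.equiv h' y) = B x y := by
  rw [h'.apply_eq, h.apply_eq, h.apply_equiv_right, h.apply_equiv_right, h.apply_left_equiv,
    h.apply_left_equiv]

theorem smul_inv_smul {K V : Type*} [Field K] [AddCommGroup V] [Module K V]
    {B : V →ₗ[K] V →ₗ[K] K} {a b : V} (h : IsSymplecticBasis B a b) {μ : K} (hμ : μ ≠ 0) :
    IsSymplecticBasis B (μ • a) (μ⁻¹ • b) where
  isAlt := h.isAlt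
  span_eq_top := by
    refine Submodule.eq_top_iff'.mpr fun x ↦ Submodule.mem_span_pair.mpr
      ⟨B x b * μ⁻¹, B a x * μ, ?_⟩
    rw [smul_smul, smul_smul, inv_mul_cancel_right₀ hμ, mul_inv_cancel_right₀ hμ,
      ← h.eq_smul_add_smul]
  apply_eq_one := by simp [h.apply_eq_one, hμ]

end IsSymplecticBasis

section TwoDimensional

variable {k T T' : Type*} [Field k] [AddCommGroup T] [Module k T] [AddCommGroup T']
  [Module k T'] {tp : T →ₗ[k] T →ₗ[k] T →ₗ[k] T} {B : T →ₗ[k] T →ₗ[k] k}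
  {tp' : T' →ₗ[k] T' →ₗ[k] T' →ₗ[k] T'} {B' : T' →ₗ[k] T' →ₗ[k] k} {a b : T} {a' b' : T'}

theorem STSTypeI.isSymplecticBasis {α : k} (hI : STSTypeI k tp B a b α) (hB : B.IsAlt) :
    IsSymplecticBasis B a b :=
  ⟨hB, hI.1, hI.2.1⟩

theorem STSTypeII.isSymplecticBasis {ε : k} (hII : STSTypeII k tp B a b ε) (hB : B.IsAlt) :
    IsSymplecticBasis B a b :=
  ⟨hB, hII.1, hII.2.1⟩

theorem STSTypeI.tp_eq {α : k} (hI : STSTypeI k tp B a b α) (hB : B.IsAlt) (x y z : T) :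
    tp x y z = (B x b * B y b * B z b * α) • b := by
  have h := hI.isSymplecticBasis hB
  obtain ⟨-, -, h₁, h₂, h₃, h₄, h₅, h₆, h₇, h₈⟩ := hI
  conv_lhs => rw [h.eq_smul_add_smul x, h.eq_smul_add_smul y, h.eq_smul_add_smul z]
  simp only [map_add, map_smul, LinearMap.add_apply, LinearMap.smul_apply,
    h₁, h₂, h₃, h₄, h₅, h₆, h₇, h₈, smul_zero, add_zero]
  module

theorem STSTypeII.tp_eq {ε : k} (hII : STSTypeII k tp B a b ε) (hB : B.IsAlt) (x y z : T) :
    tp x y z =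
      (ε * (B x b * B y b * B a z + B x b * B a y * B z b + B a x * B y b * B z b)) • a -
      (ε * (B x b * B a y * B a z + B a x * B y b * B a z + B a x * B a y * B z b)) • b := by
  have h := hII.isSymplecticBasis hB
  obtain ⟨-, -, -, h₁, h₈, h₂, h₃, h₄, h₅, h₆, h₇⟩ := hII
  conv_lhs => rw [h.eq_smul_add_smul x, h.eq_smul_add_smul y, h.eq_smul_add_smul z]
  simp only [map_add, map_smul, LinearMap.add_apply, LinearMap.smul_apply,
    h₁, h₂, h₃, h₄, h₅, h₆, h₇, h₈, smul_zero, add_zero, zero_add]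
  module

theorem STSTypeI.exists_pow_four_of_isomorphic {α α' : k} (hB' : B'.IsAlt)
    (hI : STSTypeI k tp B a b α) (hI' : STSTypeI k tp' B' a' b' α')
    (hiso : STSIsomorphic k tp B tp' B') : ∃ μ : k, μ ≠ 0 ∧ α = μ ^ 4 * α' := by
  obtain ⟨φ, hφB, hφtp⟩ := hiso
  obtain ⟨-, hab, hI_aaa, -, -, -, -, -, -, hI_bbb⟩ := hI
  have h' := hI'.isSymplecticBasis hB'
  set p := B' (φ a) b'
  set q := B' a' (φ a)
  set r := B' (φ b) b'
  set s := B' a' (φ b)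
  have hdet : p * s - q * r = 1 := by
    rw [← h'.apply_eq, hφB, hab]
  have haaa := hφtp a a a
  rw [hI_aaa, map_smul, hI'.tp_eq hB'] at haaa
  have hr : α * r = 0 := by
    simpa [hB'.self_eq_zero] using congrArg (B' · b') haaa
  have hs : α * s = p * p * p * α' := by
    simpa [hB'.self_eq_zero, h'.apply_eq_one] using congrArg (B' a') haaa
  have hbbb := hφtp b b b
  rw [hI_bbb, map_zero, hI'.tp_eq hB'] at hbbb
  have hr' : r * r * r * α' = 0 := by
    simpa [h'.apply_eq_one] using congrArg (B' a') hbbb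
  by_cases hα' : α' = 0
  · refine ⟨1, one_ne_zero, ?_⟩
    rw [hα', mul_zero] at hs ⊢
    linear_combination p * hs - q * hr - α * hdet
  · have hr0 : r = 0 := by simpa [hα'] using hr'
    have hps : p * s = 1 := by simpa [hr0] using hdet
    refine ⟨p, left_ne_zero_of_mul_eq_one hps, ?_⟩
    linear_combination p * hs - α * hps

theorem STSTypeI.isomorphic_of_eq_pow_four {α α' μ : k} (hμ : μ ≠ 0) (hαα' : α = μ ^ 4 * α')
    (hB : B.IsAlt) (hB' : B'.IsAlt)
    (hI : STSTypeI k tp B a b α) (hI' : STSTypeI k tp' B' a' b' α') :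
    STSIsomorphic k tp B tp' B' := by
  have h := hI.isSymplecticBasis hB
  have h' := (hI'.isSymplecticBasis hB').smul_inv_smul hμ
  refine ⟨h.equiv h', h.apply_equiv_equiv h', fun x y z ↦ ?_⟩
  have hcoord (w : T) : B' (h.equiv h' w) b' = μ * B w b := by
    rw [← h.apply_equiv_right h' w, map_smul, smul_eq_mul, mul_inv_cancel_left₀ hμ]
  rw [hI.tp_eq hB, hI'.tp_eq hB', map_smul, h.equiv_right, hcoord, hcoord, hcoord, hαα',
    smul_smul]
  congr 1
  field_simp

theorem STSTypeII.eq_of_isomorphic {ε ε' : k} (h3 : (3 : k) = 0) (hB' : B'.IsAlt)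
    (hII : STSTypeII k tp B a b ε) (hII' : STSTypeII k tp' B' a' b' ε')
    (hiso : STSIsomorphic k tp B tp' B') : ε = ε' := by
  obtain ⟨φ, hφB, hφtp⟩ := hiso
  obtain ⟨-, hab, -, -, -, hII_aab, -⟩ := hII
  have h' := hII'.isSymplecticBasis hB'
  set p := B' (φ a) b'
  set q := B' a' (φ a)
  set r := B' (φ b) b'
  set s := B' a' (φ b)
  have hdet : p * s - q * r = 1 := by
    rw [← h'.apply_eq, hφB, hab]
  have haab := hφtp a a b
  rw [hII_aab, map_smul, hII'.tp_eq hB'] at haab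
  have ha := congrArg (B' · b') haab
  have hb := congrArg (B' a') haab
  simp [hB'.self_eq_zero, h'.apply_eq_one] at ha hb
  have hp : ε * p = ε' * p := by
    linear_combination ha + ε' * p * hdet + ε' * p * q * r * h3
  have hq : ε * q = ε' * q := by
    linear_combination hb + ε' * q * hdet - ε' * q * p * s * h3
  by_cases hp0 : p = 0
  · have hq0 : q ≠ 0 := by
      intro hq0
      simp [hp0, hq0] at hdet
    exact mul_right_cancel₀ hq0 hq
  · exact mul_right_cancel₀ hp0 hp

theorem STSTypeII.isomorphic_of_eq {ε : k} (hB : B.IsAlt) (hB' : B'.IsAlt)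
    (hII : STSTypeII k tp B a b ε) (hII' : STSTypeII k tp' B' a' b' ε) :
    STSIsomorphic k tp B tp' B' := by
  have h := hII.isSymplecticBasis hB
  have h' := hII'.isSymplecticBasis hB'
  refine ⟨h.equiv h', h.apply_equiv_equiv h', fun x y z ↦ ?_⟩
  simp only [hII.tp_eq hB, hII'.tp_eq hB', map_sub, map_smul, h.equiv_left, h.equiv_right,
    h.apply_equiv_right, h.apply_left_equiv]

theorem STSTypeI.isomorphic_iff {α α' : k} (hB : B.IsAlt) (hB' : B'.IsAlt)
    (hI : STSTypeI k tp B a b α) (hI' : STSTypeI k tp' B' a' b' α') :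
    STSIsomorphic k tp B tp' B' ↔ ∃ μ : k, μ ≠ 0 ∧ α = μ ^ 4 * α' :=
  ⟨hI.exists_pow_four_of_isomorphic hB' hI', fun ⟨_, hμ, hαα'⟩ ↦
    STSTypeI.isomorphic_of_eq_pow_four hμ hαα' hB hB' hI hI'⟩

theorem STSTypeII.isomorphic_iff {ε ε' : k} (h3 : (3 : k) = 0) (hB : B.IsAlt)
    (hB' : B'.IsAlt) (hII : STSTypeII k tp B a b ε) (hII' : STSTypeII k tp' B' a' b' ε') :
    STSIsomorphic k tp B tp' B' ↔ ε = ε' :=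
  ⟨hII.eq_of_isomorphic h3 hB' hII', fun hεε' ↦ hII.isomorphic_of_eq hB hB' (hεε' ▸ hII')⟩

end TwoDimensional

/-- Over a field of characteristic 3, two two-dimensional symplectic triple
systems of type (i) with parameters `α`, `α'` are isomorphic iff `α = μ⁴ • α'` for some
`μ ≠ 0`; two of type (ii) with parameters `ε`, `ε'` are isomorphic iff `ε = ε'`. -/
theorem iso_classification_two_dim_STS_char_three (k : Type*) [Field k]
    (hchar : ringChar k = 3) :
    (∀ (T T' : Type) (_ : AddCommGroup T) (_ : Module k T) (_ : AddCommGroup T')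
        (_ : Module k T') (_ : FiniteDimensional k T) (_ : FiniteDimensional k T')
        (tp : T →ₗ[k] T →ₗ[k] T →ₗ[k] T) (B : T →ₗ[k] T →ₗ[k] k)
        (tp' : T' →ₗ[k] T' →ₗ[k] T' →ₗ[k] T') (B' : T' →ₗ[k] T' →ₗ[k] k)
        (a b : T) (α : k) (a' b' : T') (α' : k),
        Module.finrank k T = 2 → Module.finrank k T' = 2 →
        IsSympTripleSystem k tp B → IsSympTripleSystem k tp' B' →
        STSTypeI k tp B a b α → STSTypeI k tp' B' a' b' α' →
        (STSIsomorphic k tp B tp' B' ↔ ∃ μ : k, μ ≠ 0 ∧ α = μ ^ 4 * α')) ∧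
    (∀ (T T' : Type) (_ : AddCommGroup T) (_ : Module k T) (_ : AddCommGroup T')
        (_ : Module k T') (_ : FiniteDimensional k T) (_ : FiniteDimensional k T')
        (tp : T →ₗ[k] T →ₗ[k] T →ₗ[k] T) (B : T →ₗ[k] T →ₗ[k] k)
        (tp' : T' →ₗ[k] T' →ₗ[k] T' →ₗ[k] T') (B' : T' →ₗ[k] T' →ₗ[k] k)
        (a b : T) (ε : k) (a' b' : T') (ε' : k),
        Module.finrank k T = 2 → Module.finrank k T' = 2 →
        IsSympTripleSystem k tp B → IsSympTripleSystem k tp' B' →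
        STSTypeII k tp B a b ε → STSTypeII k tp' B' a' b' ε' →
        (STSIsomorphic k tp B tp' B' ↔ ε = ε')) := by
  have h3 : (3 : k) = 0 := by exact_mod_cast hchar ▸ ringChar.Nat.cast_ringChar (R := k)
  exact ⟨fun _ _ _ _ _ _ _ _ _ _ _ _ _ _ _ _ _ _ _ _ hT hT' hI hI' ↦
      STSTypeI.isomorphic_iff hT.1 hT'.1 hI hI',
    fun _ _ _ _ _ _ _ _ _ _ _ _ _ _ _ _ _ _ _ _ hT hT' hII hII' ↦
      STSTypeII.isomorphic_iff h3 hT.1 hT'.1 hII hII'⟩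
end

section
/- Let T be a symplectic triple system over a field of characteristic 3. Then [xyz] + [yzx] + [zxy] = 0 for all x,y,z ∈ T; that is, the Z₂-graded algebra g̃(T) = inder(T) ⊕ T, with inder(T) a Lie subalgebra acting naturally on T and with [x,y] = d_{x,y} for x,y ∈ T, satisfies the graded (super) Jacobi identity, so g̃(T) is a Lie superalgebra. -/
/-- In a symplectic triple system over a field of characteristic 3 the
cyclic sum `[xyz] + [yzx] + [zxy]` vanishes; i.e. the odd-odd-odd component of the graded
(super) Jacobi identity holds for `g̃(T) = inder(T) ⊕ T` with `[x, y] = d_{x,y}`, so that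
`g̃(T)` is a Lie superalgebra. -/
theorem STS_superJacobi_char_three (k T : Type*) [Field k] [AddCommGroup T] [Module k T]
    [FiniteDimensional k T] (hchar : ringChar k = 3)
    (tp : T →ₗ[k] T →ₗ[k] T →ₗ[k] T) (B : T →ₗ[k] T →ₗ[k] k)
    (hsts : IsSympTripleSystem k tp B) :
    ∀ x y z : T, tp x y z + tp y z x + tp z x y = 0 := by
  obtain ⟨halt, -, ha, hb, -, -⟩ := hsts
  have h3 : (3 : k) = 0 := by
    have : CharP k 3 := hchar ▸ ringChar.charP k
    exact CharP.cast_eq_zero k 3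
  have hskew : ∀ x y : T, B x y = - B y x := by
    intro x y
    have h := halt (x + y)
    simp only [map_add, LinearMap.add_apply, halt] at h
    linear_combination h
  intro x y z
  have e1 : tp y z x = (B z x • y - B z y • x + (2 * B y x) • z) + tp z x y := by
    rw [ha y z x]
    linear_combination (norm := module) hb z y x
  have e2 : tp z x y = tp x y z - (B x z • y - B x y • z + (2 * B y z) • x) := by
    rw [ha z x y]
    linear_combination (norm := module) -hb x y z
  rw [e1, e2, hskew z x, hskew z y, hskew y x]
  have : tp x y z + ((-B x z • y - -B y z • x + (2 * -B x y) • z) +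
      (tp x y z - (B x z • y - B x y • z + (2 * B y z) • x))) +
      (tp x y z - (B x z • y - B x y • z + (2 * B y z) • x)) =
      (3 : k) • (tp x y z - B x z • y - B y z • x) := by module
  rw [this, h3, zero_smul]
end

section
/- Let T be a finite-dimensional vector space over a field k of characteristic ≠ 2, endowed with a nonzero symmetric bilinear form (·|·) and a trilinear product [···] satisfying, for all x,y,u,v,w ∈ T: (a) [xxy] = 0; (b) [xyy] = (x|y)y − (y|y)x; (c) [xy[uvw]] = [[xyu]vw] + [u[xyv]w] + [uv[xyw]]. Then ([xyu]|v) + (u|[xyv]) = 0 for all x,y,u,v ∈ T; that is, identity (d) in the definition of an orthogonal triple system is a consequence of identities (a), (b), (c). -/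
/-- For a trilinear product `tp` and a nonzero symmetric bilinear form
`B` on a finite-dimensional space over a field of characteristic `≠ 2` satisfying the
orthogonal triple system identities (a) `[xxy] = 0`, (b) `[xyy] = (x|y)y - (y|y)x` and
(c) (the derivation identity), identity (d) `([xyu]|v) + (u|[xyv]) = 0` follows. -/
theorem OTS_identity_d_of_abc (k T : Type*) [Field k] [AddCommGroup T] [Module k T]
    [FiniteDimensional k T] (hchar : ringChar k ≠ 2)
    (tp : T →ₗ[k] T →ₗ[k] T →ₗ[k] T) (B : T →ₗ[k] T →ₗ[k] k)
    (hsymm : ∀ x y : T, B x y = B y x) (hne : B ≠ 0)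
    (ha : ∀ x y : T, tp x x y = 0)
    (hb : ∀ x y : T, tp x y y = B x y • y - B y y • x)
    (hc : ∀ x y u v w : T, tp x y (tp u v w) =
      tp (tp x y u) v w + tp u (tp x y v) w + tp u v (tp x y w)) :
    ∀ x y u v : T, B (tp x y u) v + B u (tp x y v) = 0 := by
  -- Linearized form of (b)
  have hb' : ∀ x a v : T, tp x a v + tp x v a
      = B x a • v + B x v • a - (B a v + B v a) • x := by
    intro x a v
    have h := hb x (a + v)
    simp only [map_add, LinearMap.add_apply, add_smul, smul_add] at h
    rw [hb x a, hb x v] at h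
    linear_combination (norm := module) h
  -- Key identity from (c) with w = v
  have key : ∀ x y u v : T, (B (tp x y u) v + B u (tp x y v)) • v
      = (B (tp x y v) v + B v (tp x y v)) • u := by
    intro x y u v
    have h1 := hc x y u v v
    rw [hb u v, hb (tp x y u) v] at h1
    simp only [map_sub, map_smul, LinearMap.sub_apply, LinearMap.smul_apply] at h1
    have h2 := hb' u (tp x y v) v
    linear_combination (norm := module) -h1 - h2
  -- The scalar on the right hand side vanishes
  have hg : ∀ x y v : T, B (tp x y v) v + B v (tp x y v) = 0 := by
    intro x y v
    by_contra hgne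
    have hspan : ∀ u : T, u ∈ Submodule.span k {v} := by
      intro u
      refine Submodule.mem_span_singleton.mpr
        ⟨(B (tp x y v) v + B v (tp x y v))⁻¹ * (B (tp x y u) v + B u (tp x y v)), ?_⟩
      rw [mul_smul, key x y u v, inv_smul_smul₀ hgne]
    obtain ⟨a, hx⟩ := Submodule.mem_span_singleton.mp (hspan x)
    obtain ⟨b, hy⟩ := Submodule.mem_span_singleton.mp (hspan y)
    have hz : tp x y v = 0 := by
      rw [← hx, ← hy]
      simp [ha]
    rw [hz] at hgne
    simp at hgne
  intro x y u v
  rcases eq_or_ne v 0 with rfl | hv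
  · simp
  · have hk := key x y u v
    rw [hg x y v, zero_smul] at hk
    rcases smul_eq_zero.mp hk with h | h
    · exact h
    · exact absurd h hv
end
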